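/- Let A ∈ (𝕊max)^{n×n}, let γ ∈ 𝕊max^∨ be an 𝕊max-eigenvalue of A (i.e. det(γ⊙I ⊖ A) ∇ 𝟘), and set B = γ⊙I ⊖ A. If the j-th column (B^adj)_{:,j} belongs to (𝕊max^∨)ⁿ ∖ {𝟘}, then (B^adj)_{:,j} satisfies A ⊙ (B^adj)_{:,j} ∇ γ ⊙ (B^adj)_{:,j}, and every v ∈ (𝕊max^∨)ⁿ ∖ {𝟘} with A ⊙ v ∇ γ ⊙ v satisfies v = λ ⊙ (B^adj)_{:,j} for some λ ∈ 𝕊max^∨ ∖ {𝟘}. -/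

import Mathlib

/-!
Common framework: the symmetrized tropical semiring 𝕊max over a linearly
ordered abelian group Γ, represented concretely: an element is either 𝟘
(represented by `none`) or a pair of a modulus `c : Γ` and a sign
(positive, negative or balanced), matching the classes of the quotient
𝕋max²/ℛ described in the paper.
-/

namespace TropPaper

inductive SSign : Type
  | pos
  | neg
  | bal
  deriving DecidableEq

/-- The symmetrized tropical semiring 𝕊max(Γ): `none` is 𝟘, and
`some (c, s)` is the class of modulus `c` and sign `s`. -/
def Smax (Γ : Type) : Type := Option (Γ × SSign)

/-- Γ is divisible. -/
def DivisibleGrp (Γ : Type) [AddCommGroup Γ] : Prop :=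
  ∀ k : ℕ, 0 < k → ∀ a : Γ, ∃ b : Γ, k • b = a

section Defs

variable {Γ : Type} [AddCommGroup Γ] [LinearOrder Γ] [IsOrderedAddMonoid Γ]

/-- 𝟘 -/
def szero : Smax Γ := none

/-- 𝟙 -/
def sone : Smax Γ := some ((0 : Γ), SSign.pos)

/-- modulus |·| : 𝕊max → 𝕋max = WithBot Γ -/
def smod : Smax Γ → WithBot Γ
  | none => ⊥
  | some (c, _) => (c : WithBot Γ)

def sgnMul : SSign → SSign → SSign
  | SSign.pos, t => t
  | SSign.neg, SSign.pos => SSign.neg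
  | SSign.neg, SSign.neg => SSign.pos
  | SSign.neg, SSign.bal => SSign.bal
  | SSign.bal, _ => SSign.bal

/-- ⊕ on 𝕊max -/
def sadd : Smax Γ → Smax Γ → Smax Γ
  | none, b => b
  | some a, none => some a
  | some (c, s), some (d, t) =>
      if c < d then some (d, t)
      else if d < c then some (c, s)
      else some (c, if s = t then s else SSign.bal)

/-- ⊖ (unary) on 𝕊max -/
def sneg : Smax Γ → Smax Γ
  | none => none
  | some (c, SSign.pos) => some (c, SSign.neg)
  | some (c, SSign.neg) => some (c, SSign.pos)
  | some (c, SSign.bal) => some (c, SSign.bal)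

/-- ⊙ on 𝕊max -/
def smul : Smax Γ → Smax Γ → Smax Γ
  | none, _ => none
  | some _, none => none
  | some (c, s), some (d, t) => some (c + d, sgnMul s t)

/-- a ⊖ b -/
def ssub (a b : Smax Γ) : Smax Γ := sadd a (sneg b)

/-- a° = a ⊖ a -/
def sbal (a : Smax Γ) : Smax Γ := ssub a a

/-- the positive element with the same modulus (|·| seen inside 𝕊max⊕) -/
def sabs : Smax Γ → Smax Γ
  | none => none
  | some (c, _) => some (c, SSign.pos)

/-- multiplicative inverse (of invertible, i.e. signed nonzero, elements) -/
def sinv : Smax Γ → Smax Γ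
  | none => none
  | some (c, s) => some (-c, s)

/-- a^{⊙k} -/
def spow (a : Smax Γ) : ℕ → Smax Γ
  | 0 => sone
  | k + 1 => smul a (spow a k)

/-- membership in 𝕊max° (balanced elements together with 𝟘) -/
def IsBal : Smax Γ → Prop
  | none => True
  | some (_, s) => s = SSign.bal

/-- membership in 𝕊max⊕ (positive elements together with 𝟘) -/
def IsPos : Smax Γ → Prop
  | none => True
  | some (_, s) => s = SSign.pos

/-- membership in 𝕊max^∨ (signed elements) -/
def IsSigned : Smax Γ → Prop
  | none => True
  | some (_, s) => s ≠ SSign.bal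

/-- the balance relation a ∇ b -/
def Balance (a b : Smax Γ) : Prop := IsBal (ssub a b)

/-- a ⪯ b -/
def natLe (a b : Smax Γ) : Prop := sadd a b = b

/-- a ≤ b :⟺ b ⊖ a ∈ 𝕊max⊕ ∪ 𝕊max° -/
def sle (a b : Smax Γ) : Prop := IsPos (ssub b a) ∨ IsBal (ssub b a)

/-- a < b :⟺ b ⊖ a ∈ 𝕊max⊕ ∖ {𝟘} -/
def slt (a b : Smax Γ) : Prop := IsPos (ssub b a) ∧ ssub b a ≠ szero

/-- finite ⊕-sum over a list -/
def sumS {α : Type} (l : List α) (f : α → Smax Γ) : Smax Γ :=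
  (l.map f).foldr sadd szero

/-- finite ⊙-product over a list -/
def prodS {α : Type} (l : List α) (f : α → Smax Γ) : Smax Γ :=
  (l.map f).foldr smul sone

/-- the zero vector -/
def zeroVecS {n : ℕ} : Fin n → Smax Γ := fun _ => szero

def VecSigned {n : ℕ} (x : Fin n → Smax Γ) : Prop := ∀ i, IsSigned (x i)

def MatSigned {n : ℕ} (A : Matrix (Fin n) (Fin n) (Smax Γ)) : Prop :=
  ∀ i j, IsSigned (A i j)

def SymmS {n : ℕ} (A : Matrix (Fin n) (Fin n) (Smax Γ)) : Prop :=
  ∀ i j, A i j = A j i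

/-- A ⊙ v -/
def matVecS {n : ℕ} (A : Matrix (Fin n) (Fin n) (Smax Γ)) (v : Fin n → Smax Γ) :
    Fin n → Smax Γ :=
  fun i => sumS (List.finRange n) fun j => smul (A i j) (v j)

/-- A ⊙ B -/
def matMulS {n : ℕ} (A B : Matrix (Fin n) (Fin n) (Smax Γ)) :
    Matrix (Fin n) (Fin n) (Smax Γ) :=
  Matrix.of fun i j => sumS (List.finRange n) fun l => smul (A i l) (B l j)

/-- the identity matrix I -/
def idMatS {n : ℕ} : Matrix (Fin n) (Fin n) (Smax Γ) :=
  Matrix.of fun i j => if i = j then sone else szero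

/-- xᵀ ⊙ A ⊙ x -/
def quadFormS {n : ℕ} (A : Matrix (Fin n) (Fin n) (Smax Γ)) (x : Fin n → Smax Γ) :
    Smax Γ :=
  sumS (List.finRange n) fun i => sumS (List.finRange n) fun j =>
    smul (x i) (smul (A i j) (x j))

/-- tropical positive definiteness (the quadratic-form condition) -/
def TPD {n : ℕ} (A : Matrix (Fin n) (Fin n) (Smax Γ)) : Prop :=
  ∀ x : Fin n → Smax Γ, VecSigned x → x ≠ zeroVecS → slt szero (quadFormS A x)

/-- tropical positive semidefiniteness -/
def TPSD {n : ℕ} (A : Matrix (Fin n) (Fin n) (Smax Γ)) : Prop :=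
  ∀ x : Fin n → Smax Γ, VecSigned x → x ≠ zeroVecS → sle szero (quadFormS A x)

/-- sgn(π) ∈ {𝟙, ⊖𝟙} -/
def permSignS {n : ℕ} (π : Equiv.Perm (Fin n)) : Smax Γ :=
  if (Equiv.Perm.sign π : ℤ) = 1 then sone else sneg sone

/-- the determinant over 𝕊max -/
noncomputable def detS {n : ℕ} (M : Matrix (Fin n) (Fin n) (Smax Γ)) : Smax Γ :=
  sumS (Finset.univ : Finset (Equiv.Perm (Fin n))).toList fun π =>
    smul (permSignS π) (prodS (List.finRange n) fun i => M i (π i))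

/-- the adjugate matrix over 𝕊max -/
noncomputable def adjS {n : ℕ} (M : Matrix (Fin (n+1)) (Fin (n+1)) (Smax Γ)) :
    Matrix (Fin (n+1)) (Fin (n+1)) (Smax Γ) :=
  Matrix.of fun i j =>
    smul (spow (sneg sone) (i.val + j.val))
      (detS (Matrix.of fun a b : Fin n => M (Fin.succAbove j a) (Fin.succAbove i b)))

/-- γ ⊙ I ⊖ A -/
def charMatS {n : ℕ} (γ : Smax Γ) (A : Matrix (Fin n) (Fin n) (Smax Γ)) :
    Matrix (Fin n) (Fin n) (Smax Γ) :=
  Matrix.of fun i j => ssub (smul γ (idMatS i j)) (A i j)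

/-- tr_k(A) = ⊕_{|K| = k} det(A[K,K]) -/
noncomputable def trkS {n : ℕ} (k : ℕ) (A : Matrix (Fin n) (Fin n) (Smax Γ)) : Smax Γ :=
  sumS ((Finset.univ : Finset (Fin n)).powersetCard k).attach.toList fun K =>
    detS (Matrix.of fun a b : Fin k =>
      A (K.1.orderEmbOfFin (Finset.mem_powersetCard.mp K.2).2 a)
        (K.1.orderEmbOfFin (Finset.mem_powersetCard.mp K.2).2 b))

/-- matrix power A^{⊙k} -/
def matPowS {n : ℕ} (A : Matrix (Fin n) (Fin n) (Smax Γ)) :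
    ℕ → Matrix (Fin n) (Fin n) (Smax Γ)
  | 0 => idMatS
  | k + 1 => matMulS A (matPowS A k)

/-- partial Kleene sums I ⊕ A ⊕ ⋯ ⊕ A^{⊙m} -/
def starPartialS {n : ℕ} (A : Matrix (Fin n) (Fin n) (Smax Γ)) (m : ℕ) :
    Matrix (Fin n) (Fin n) (Smax Γ) :=
  Matrix.of fun i j => sumS (List.range (m+1)) fun k => matPowS A k i j

/-- the diagonal matrix D^(k) with diagonal (γ₁,…,γ_{k−1},𝟘,…,𝟘) (0-based k) -/
def DmatS {n : ℕ} (A : Matrix (Fin n) (Fin n) (Smax Γ)) (k : Fin n) :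
    Matrix (Fin n) (Fin n) (Smax Γ) :=
  Matrix.of fun i j => if i = j ∧ i < k then A i i else szero

/-- the complementary matrix A^(k) -/
def AmatS {n : ℕ} (A : Matrix (Fin n) (Fin n) (Smax Γ)) (k : Fin n) :
    Matrix (Fin n) (Fin n) (Smax Γ) :=
  Matrix.of fun i j => if i ≠ j ∨ k ≤ i then A i j else szero

/-- M = (γ⊙I ⊖ D^(k))^{⊙−1} ⊙ A^(k) -/
def MmatS {n : ℕ} (A : Matrix (Fin n) (Fin n) (Smax Γ)) (k : Fin n) :
    Matrix (Fin n) (Fin n) (Smax Γ) :=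
  Matrix.of fun i j =>
    smul (sinv (if i < k then sneg (A i i) else A k k)) (AmatS A k i j)

/-- λ_k = (⊖𝟙)^{⊙(k−1)} ⊙ γ₁ ⊙ ⋯ ⊙ γ_{k−1} ⊙ γ^{⊙(n−k)} (0-based k, size n) -/
def lamkS {n : ℕ} (A : Matrix (Fin n) (Fin n) (Smax Γ)) (k : Fin n) : Smax Γ :=
  smul (spow (sneg sone) k.val)
    (smul (prodS ((List.finRange n).filter (fun i => i < k)) fun i => A i i)
      (spow (A k k) (n - 1 - k.val)))

/-- irreducibility: the digraph of nonzero entries is strongly connected -/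
def IrreducibleS {n : ℕ} (A : Matrix (Fin n) (Fin n) (Smax Γ)) : Prop :=
  ∀ i j : Fin n, Relation.ReflTransGen (fun a b => A a b ≠ szero) i j

/-- diagonal entries sorted non-increasingly for ⪯ -/
def DiagSortedS {n : ℕ} (A : Matrix (Fin n) (Fin n) (Smax Γ)) : Prop :=
  ∀ i j : Fin n, i ≤ j → natLe (A j j) (A i i)

/-! 𝕋max-side notions (for the characteristic polynomial of |A|). -/

/-- finite max over a list in 𝕋max -/
def sumT {α : Type} (l : List α) (f : α → WithBot Γ) : WithBot Γ :=
  (l.map f).foldr max ⊥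

/-- finite ⊙-product over a list in 𝕋max -/
def prodT {α : Type} (l : List α) (f : α → WithBot Γ) : WithBot Γ :=
  (l.map f).foldr (· + ·) (0 : WithBot Γ)

/-- the permanent over 𝕋max -/
noncomputable def perT {n : ℕ} (M : Matrix (Fin n) (Fin n) (WithBot Γ)) : WithBot Γ :=
  sumT (Finset.univ : Finset (Equiv.Perm (Fin n))).toList fun π =>
    prodT (List.finRange n) fun i => M i (π i)

/-- coefficient of X^k in the 𝕋max-characteristic polynomial of B -/
noncomputable def charCoeffT {n : ℕ} (B : Matrix (Fin n) (Fin n) (WithBot Γ)) (k : ℕ) : WithBot Γ :=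
  if k ≤ n then
    sumT ((Finset.univ : Finset (Fin n)).powersetCard (n - k)).attach.toList fun K =>
      perT (Matrix.of fun a b : Fin (n - k) =>
        B (K.1.orderEmbOfFin (Finset.mem_powersetCard.mp K.2).2 a)
          (K.1.orderEmbOfFin (Finset.mem_powersetCard.mp K.2).2 b))
  else ⊥

/-- multiplicity of x as a 𝕋max-root of the formal polynomial of degree ≤ n
with coefficients Q: for x = ⊥ it is the lower degree, for x = c ∈ Γ it is the
difference between the largest and smallest exponents attaining
max_k (Q_k + k·c). -/
noncomputable def rootMultT (n : ℕ) (Q : ℕ → WithBot Γ) (x : WithBot Γ) : ℕ :=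
  WithBot.recBotCoe
    (sInf {k | Q k ≠ ⊥})
    (fun c =>
      sSup {k | k ≤ n ∧ Q k + ((k • c : Γ) : WithBot Γ)
              = sumT (List.range (n+1)) (fun l => Q l + ((l • c : Γ) : WithBot Γ))}
        - sInf {k | k ≤ n ∧ Q k + ((k • c : Γ) : WithBot Γ)
              = sumT (List.range (n+1)) (fun l => Q l + ((l • c : Γ) : WithBot Γ))})
    x

end Defs

/-- the signed valuation associated with a valuation v on an ordered field L -/
def svMap {Γ : Type} [AddCommGroup Γ] [LinearOrder Γ] [IsOrderedAddMonoid Γ] {L : Type}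
    [Field L] [LinearOrder L] [IsStrictOrderedRing L]
    (v : L → WithBot Γ) (b : L) : Smax Γ :=
  if b = 0 then szero
  else if 0 < b then WithBot.recBotCoe szero (fun c => some (c, SSign.pos)) (v b)
  else WithBot.recBotCoe szero (fun c => some (c, SSign.neg)) (v b)

end TropPaper

/-!
Replacing row `j` of a matrix `M` by a vector `u` gives, by Laplace expansion along that row, a
matrix of determinant `⊕ₗ uₗ ⊙ (M^adj)ₗⱼ`. For `M = γ ⊙ I ⊖ A` and `u` the `i`-th row of `M`
this is `det M ∇ 𝟘` when `i = j`, and otherwise the determinant of a matrix with two equal rows: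
so the column `w` of the adjugate is an eigenvector. For an eigenvector `v`, take
`u = vᵢ eₖ ⊖ vₖ eᵢ`: the signed nonzero vector `v` still balances every row, hence the
determinant `vᵢ ⊙ wₖ ⊖ vₖ ⊙ wᵢ` is balanced, and two signed elements that balance are equal.
So `vᵢ ⊙ wₖ = vₖ ⊙ wᵢ`, which makes `v` a signed multiple of `w`.

The two determinant facts are proved by lifting to the group algebra `ℝ[Γ]`, reading an element
of `𝕊max` off the leading term. Sums and products of lifts lift sums and products, so an
entrywise lift of a matrix has a determinant lifting its `𝕊max`-determinant, and only a balanced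
element is lifted by `0`. A matrix with two equal rows lifts to one with two equal rows. A row
balancing `v` can be lifted, by solving for one pivot coefficient, to a row annihilating the lift
of `v` exactly; the lifted matrix is then singular.
-/

-- Elements of `Smax Γ` are handled through the constructors of the underlying `Option`.
attribute [reducible] TropPaper.Smax

namespace Fin

variable {n : ℕ}

/-- The permutation of `Fin (n + 1)` sending `j` to `l` and `j.succAbove a` to
`l.succAbove (σ a)`. -/
def permSuccAbove (j l : Fin (n + 1)) (σ : Equiv.Perm (Fin n)) : Equiv.Perm (Fin (n + 1)) :=
  j.cycleRange.trans ((Equiv.Perm.decomposeFin.symm (0, σ)).trans l.cycleRange.symm)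

@[simp] lemma permSuccAbove_apply_self (j l : Fin (n + 1)) (σ : Equiv.Perm (Fin n)) :
    permSuccAbove j l σ j = l := by
  simp [permSuccAbove]

@[simp] lemma permSuccAbove_apply_succAbove (j l : Fin (n + 1)) (σ : Equiv.Perm (Fin n))
    (a : Fin n) : permSuccAbove j l σ (j.succAbove a) = l.succAbove (σ a) := by
  simp [permSuccAbove]

lemma sign_permSuccAbove (j l : Fin (n + 1)) (σ : Equiv.Perm (Fin n)) :
    Equiv.Perm.sign (permSuccAbove j l σ) = (-1) ^ ((l : ℕ) + j) * Equiv.Perm.sign σ := by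
  simp only [permSuccAbove, Equiv.Perm.sign_trans, Equiv.Perm.sign_symm, sign_cycleRange,
    Equiv.Perm.decomposeFin.symm_sign, if_true, one_mul, pow_add]
  exact mul_right_comm _ _ _

lemma bijective_permSuccAbove (j : Fin (n + 1)) :
    Function.Bijective fun p : Fin (n + 1) × Equiv.Perm (Fin n) => permSuccAbove j p.1 p.2 := by
  rw [Fintype.bijective_iff_injective_and_card]
  refine ⟨fun ⟨l, σ⟩ ⟨l', σ'⟩ h => ?_,
    by simp [Fintype.card_perm, Nat.factorial_succ]⟩
  have hl : l = l' := by simpa using DFunLike.congr_fun h j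
  subst hl
  refine Prod.ext rfl (Equiv.ext fun a => succAbove_right_injective (p := l) ?_)
  simpa using DFunLike.congr_fun h (j.succAbove a)

end Fin

namespace TropPaper

/-- The sign of `a ⊕ b` when `a` and `b` have the same modulus. -/
def SSign.join (s t : SSign) : SSign := if s = t then s else SSign.bal

lemma SSign.join_comm (s t : SSign) : s.join t = t.join s := by
  cases s <;> cases t <;> rfl

lemma SSign.join_assoc (s t u : SSign) : (s.join t).join u = s.join (t.join u) := by
  cases s <;> cases t <;> cases u <;> rfl

lemma sgnMul_comm (s t : SSign) : sgnMul s t = sgnMul t s := by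
  cases s <;> cases t <;> rfl

lemma sgnMul_assoc (s t u : SSign) : sgnMul (sgnMul s t) u = sgnMul s (sgnMul t u) := by
  cases s <;> cases t <;> cases u <;> rfl

lemma sgnMul_join (s t u : SSign) : sgnMul s (t.join u) = (sgnMul s t).join (sgnMul s u) := by
  cases s <;> cases t <;> cases u <;> rfl

def SSign.toReal : SSign → ℝ
  | SSign.pos => 1
  | SSign.neg => -1
  | SSign.bal => 0

lemma SSign.toReal_sgnMul (s t : SSign) : (sgnMul s t).toReal = s.toReal * t.toReal := by
  cases s <;> cases t <;> norm_num [sgnMul, SSign.toReal]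

lemma SSign.toReal_mul_self {s : SSign} (hs : s ≠ SSign.bal) : s.toReal * s.toReal = 1 := by
  cases s
  all_goals first
    | exact absurd rfl hs
    | norm_num [SSign.toReal]

lemma SSign.ne_bal_of_sgnMul_ne_bal {s t : SSign} (h : sgnMul s t ≠ SSign.bal) :
    s ≠ SSign.bal ∧ t ≠ SSign.bal := by
  cases s <;> cases t <;> simp_all [sgnMul]

lemma SSign.toReal_eq_neg_of_ne {s u : SSign} (hs : s ≠ SSign.bal) (hu : u ≠ SSign.bal)
    (hsu : u ≠ s) : u.toReal = -s.toReal := by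
  cases s <;> cases u <;> simp_all [SSign.toReal]

lemma SSign.toReal_eq_one_or {s : SSign} (hs : s ≠ SSign.bal) :
    s.toReal = 1 ∨ s.toReal = -1 := by
  cases s <;> simp_all [SSign.toReal]

section Zero

variable {Γ : Type}

instance : Zero (Smax Γ) := ⟨szero⟩

lemma szero_eq_zero : (szero : Smax Γ) = 0 := rfl

lemma none_eq_zero : (none : Smax Γ) = 0 := rfl

end Zero

section Addition

variable {Γ : Type} [LinearOrder Γ]

@[simp] lemma sadd_none_left (a : Smax Γ) : sadd none a = a := rfl

@[simp] lemma sadd_none_right (a : Smax Γ) : sadd a none = a := by cases a <;> rfl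

lemma sadd_of_lt {c d : Γ} (h : c < d) (s t : SSign) :
    sadd (some (c, s)) (some (d, t)) = some (d, t) := by
  rw [sadd, if_pos h]

lemma sadd_of_gt {c d : Γ} (h : d < c) (s t : SSign) :
    sadd (some (c, s)) (some (d, t)) = some (c, s) := by
  rw [sadd, if_neg (asymm h), if_pos h]

lemma sadd_self (c : Γ) (s t : SSign) :
    sadd (some (c, s)) (some (c, t)) = some (c, s.join t) := by
  simp only [sadd, lt_irrefl, if_false, SSign.join]

lemma sadd_comm (a b : Smax Γ) : sadd a b = sadd b a := by
  rcases a with _ | ⟨c, s⟩ <;> rcases b with _ | ⟨d, t⟩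
  · rfl
  · simp
  · simp
  rcases lt_trichotomy c d with h | rfl | h
  · rw [sadd_of_lt h, sadd_of_gt h]
  · rw [sadd_self, sadd_self, SSign.join_comm]
  · rw [sadd_of_gt h, sadd_of_lt h]

lemma sadd_assoc (x y z : Smax Γ) : sadd (sadd x y) z = sadd x (sadd y z) := by
  rcases x with _ | ⟨c, s⟩
  · simp
  rcases y with _ | ⟨d, t⟩
  · simp
  rcases z with _ | ⟨e, u⟩
  · simp
  rcases lt_trichotomy c d with h1 | rfl | h1
  · rcases lt_trichotomy d e with h2 | rfl | h2
    · simp only [sadd_of_lt h1, sadd_of_lt h2, sadd_of_lt (h1.trans h2)]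
    · simp only [sadd_of_lt h1, sadd_self]
    · simp only [sadd_of_lt h1, sadd_of_gt h2]
  · rcases lt_trichotomy c e with h2 | rfl | h2
    · simp only [sadd_self, sadd_of_lt h2]
    · simp only [sadd_self, SSign.join_assoc]
    · simp only [sadd_self, sadd_of_gt h2]
  · rcases lt_trichotomy d e with h2 | rfl | h2
    · simp only [sadd_of_gt h1, sadd_of_lt h2]
    · simp only [sadd_of_gt h1, sadd_self]
    · simp only [sadd_of_gt h1, sadd_of_gt h2, sadd_of_gt (h2.trans h1)]

instance : Add (Smax Γ) := ⟨sadd⟩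

lemma sadd_eq_add (a b : Smax Γ) : sadd a b = a + b := rfl

end Addition

section Multiplication

variable {Γ : Type} [AddCommGroup Γ]

@[simp] lemma smul_none_left (a : Smax Γ) : smul none a = none := rfl

@[simp] lemma smul_none_right (a : Smax Γ) : smul a none = none := by cases a <;> rfl

lemma smul_some_some (c d : Γ) (s t : SSign) :
    smul (some (c, s)) (some (d, t)) = some (c + d, sgnMul s t) := rfl

lemma smul_comm (a b : Smax Γ) : smul a b = smul b a := by
  rcases a with _ | ⟨c, s⟩ <;> rcases b with _ | ⟨d, t⟩ <;> try simp
  rw [smul_some_some, smul_some_some, add_comm, sgnMul_comm]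

lemma smul_assoc (x y z : Smax Γ) : smul (smul x y) z = smul x (smul y z) := by
  rcases x with _ | ⟨c, s⟩ <;> rcases y with _ | ⟨d, t⟩ <;> rcases z with _ | ⟨e, u⟩ <;>
    try simp
  simp only [smul_some_some, add_assoc, sgnMul_assoc]

lemma sone_smul (a : Smax Γ) : smul sone a = a := by
  rcases a with _ | ⟨c, s⟩
  · rfl
  · simp only [sone, smul_some_some, zero_add]
    rfl

instance : One (Smax Γ) := ⟨sone⟩
instance : Mul (Smax Γ) := ⟨smul⟩

lemma sone_eq_one : (sone : Smax Γ) = 1 := rfl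

lemma smul_eq_mul (a b : Smax Γ) : smul a b = a * b := rfl

end Multiplication

section Semiring

variable {Γ : Type} [AddCommGroup Γ] [LinearOrder Γ] [IsOrderedAddMonoid Γ]

lemma smul_sadd (x y z : Smax Γ) : smul x (sadd y z) = sadd (smul x y) (smul x z) := by
  rcases x with _ | ⟨c, s⟩
  · simp
  rcases y with _ | ⟨d, t⟩
  · simp
  rcases z with _ | ⟨e, u⟩
  · simp
  rcases lt_trichotomy d e with h | rfl | h
  · simp only [sadd_of_lt h, smul_some_some, sadd_of_lt (show c + d < c + e by gcongr)]
  · simp only [sadd_self, smul_some_some, sgnMul_join]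
  · simp only [sadd_of_gt h, smul_some_some, sadd_of_gt (show c + e < c + d by gcongr)]

instance : CommSemiring (Smax Γ) where
  add_assoc := sadd_assoc
  zero_add := sadd_none_left
  add_zero := sadd_none_right
  add_comm := sadd_comm
  nsmul := nsmulRec
  mul_assoc := smul_assoc
  one_mul := sone_smul
  mul_one a := (smul_comm a sone).trans (sone_smul a)
  mul_comm := smul_comm
  left_distrib := smul_sadd
  right_distrib a b c := by
    change smul (sadd a b) c = sadd (smul a c) (smul b c)
    rw [smul_comm, smul_sadd, smul_comm c a, smul_comm c b]
  zero_mul _ := rfl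
  mul_zero := smul_none_right

instance : NoZeroDivisors (Smax Γ) where
  eq_zero_or_eq_zero_of_mul_eq_zero {a b} h := by
    rcases a with _ | ⟨c, s⟩ <;> rcases b with _ | ⟨d, t⟩
    · exact Or.inl rfl
    · exact Or.inl rfl
    · exact Or.inr rfl
    · exact absurd h (Option.some_ne_none _)

end Semiring

section Signs

variable {Γ : Type}

lemma sneg_some (c : Γ) (s : SSign) : sneg (some (c, s)) = some (c, sgnMul SSign.neg s) := by
  cases s <;> rfl

@[simp] lemma sneg_sneg (a : Smax Γ) : sneg (sneg a) = a := by
  rcases a with _ | ⟨c, _ | _ | _⟩ <;> rfl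

@[simp] lemma isBal_sneg {a : Smax Γ} : IsBal (sneg a) ↔ IsBal a := by
  rcases a with _ | ⟨c, _ | _ | _⟩ <;> simp [sneg, IsBal]

end Signs

section Balance

variable {Γ : Type} [LinearOrder Γ]

lemma isBal_add_sneg_self (a : Smax Γ) : IsBal (a + sneg a) := by
  rcases a with _ | ⟨c, s⟩
  · trivial
  · rw [sneg_some, ← sadd_eq_add, sadd_self]
    cases s <;> rfl

lemma eq_of_isBal_add_sneg {a b : Smax Γ} (ha : IsSigned a) (hb : IsSigned b)
    (h : IsBal (a + sneg b)) : a = b := by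
  rcases a with _ | ⟨c, s⟩ <;> rcases b with _ | ⟨d, t⟩
  · rfl
  · rw [sneg_some, ← sadd_eq_add, sadd_none_left] at h
    cases t <;> simp_all [IsSigned, IsBal, sgnMul]
  · rw [← sadd_eq_add] at h
    cases s <;> simp_all [IsSigned, IsBal, sneg]
  rw [sneg_some, ← sadd_eq_add] at h
  rcases lt_trichotomy c d with hcd | rfl | hcd
  · rw [sadd_of_lt hcd] at h
    cases t <;> simp_all [IsSigned, IsBal, sgnMul]
  · rw [sadd_self] at h
    cases s <;> cases t <;> simp_all [IsSigned, IsBal, sgnMul, SSign.join]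
  · rw [sadd_of_gt hcd] at h
    cases s <;> simp_all [IsSigned, IsBal]

lemma smod_add (a b : Smax Γ) : smod (a + b) = max (smod a) (smod b) := by
  rw [← sadd_eq_add]
  rcases a with _ | ⟨c, s⟩ <;> rcases b with _ | ⟨d, t⟩
  · simp [smod]
  · simp [smod]
  · simp [smod]
  rcases lt_trichotomy c d with h | rfl | h
  · simp [sadd_of_lt h, smod, h.le]
  · simp [sadd_self, smod]
  · simp [sadd_of_gt h, smod, h.le]

end Balance

section Units

variable {Γ : Type} [AddCommGroup Γ]

lemma isSigned_mul {a b : Smax Γ} (ha : IsSigned a) (hb : IsSigned b) : IsSigned (a * b) := by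
  rcases a with _ | ⟨c, s⟩ <;> rcases b with _ | ⟨d, t⟩
  · trivial
  · trivial
  · rw [← smul_eq_mul, smul_none_right]
    trivial
  · cases s <;> cases t <;> simp_all [IsSigned, ← smul_eq_mul, smul_some_some, sgnMul]

lemma sneg_eq_sneg_one_mul (a : Smax Γ) : sneg a = sneg 1 * a := by
  rcases a with _ | ⟨c, s⟩
  · rfl
  · rw [sneg_some, ← smul_eq_mul]
    change _ = smul (some ((0 : Γ), SSign.neg)) _
    rw [smul_some_some, zero_add]

lemma isSigned_sinv {a : Smax Γ} (ha : IsSigned a) : IsSigned (sinv a) := by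
  rcases a with _ | ⟨c, s⟩
  · trivial
  · exact ha

lemma sinv_ne_zero {a : Smax Γ} (h : a ≠ 0) : sinv a ≠ 0 := by
  rcases a with _ | ⟨c, s⟩
  · exact absurd rfl h
  · exact Option.some_ne_none _

lemma mul_sinv_cancel {a : Smax Γ} (ha : IsSigned a) (h : a ≠ 0) : a * sinv a = 1 := by
  rcases a with _ | ⟨c, s⟩
  · exact absurd rfl h
  · cases s
    all_goals first
      | exact absurd rfl ha
      | rw [← smul_eq_mul, sinv, smul_some_some, add_neg_cancel]; rfl

end Units

section Symmetry

variable {Γ : Type} [AddCommGroup Γ] [LinearOrder Γ] [IsOrderedAddMonoid Γ]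

lemma sneg_add (a b : Smax Γ) : sneg (a + b) = sneg a + sneg b := by
  rw [sneg_eq_sneg_one_mul, mul_add, ← sneg_eq_sneg_one_mul, ← sneg_eq_sneg_one_mul]

lemma sneg_mul (a b : Smax Γ) : sneg (a * b) = sneg a * b := by
  rw [sneg_eq_sneg_one_mul, sneg_eq_sneg_one_mul a, mul_assoc]

lemma sneg_sum {ι : Type} (s : Finset ι) (f : ι → Smax Γ) :
    sneg (∑ i ∈ s, f i) = ∑ i ∈ s, sneg (f i) := by
  rw [sneg_eq_sneg_one_mul, Finset.mul_sum]
  simp_rw [← sneg_eq_sneg_one_mul]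

lemma smod_sum {ι : Type} (s : Finset ι) (f : ι → Smax Γ) :
    smod (∑ i ∈ s, f i) = s.sup fun i => smod (f i) := by
  classical
  induction s using Finset.cons_induction with
  | empty => rfl
  | cons i s hi ih =>
    rw [Finset.sum_cons, smod_add, ih, Finset.sup_cons]

end Symmetry

section Determinant

variable {Γ : Type} [AddCommGroup Γ] [LinearOrder Γ] [IsOrderedAddMonoid Γ]

lemma sumS_toList {α : Type} (s : Finset α) (f : α → Smax Γ) :
    sumS s.toList f = ∑ a ∈ s, f a := by
  change (s.toList.map f).foldr (· + ·) 0 = _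
  rw [← List.sum_eq_foldr, Finset.sum_map_toList]

lemma sumS_finRange {n : ℕ} (f : Fin n → Smax Γ) : sumS (List.finRange n) f = ∑ i, f i := by
  change ((List.finRange n).map f).foldr (· + ·) 0 = _
  rw [← List.sum_eq_foldr, ← Fin.sum_univ_def]

lemma prodS_finRange {n : ℕ} (f : Fin n → Smax Γ) :
    prodS (List.finRange n) f = ∏ i, f i := by
  change ((List.finRange n).map f).foldr (· * ·) 1 = _
  rw [← List.prod_eq_foldr, ← Fin.prod_univ_def]

lemma matVecS_apply {n : ℕ} (A : Matrix (Fin n) (Fin n) (Smax Γ)) (x : Fin n → Smax Γ)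
    (i : Fin n) : matVecS A x i = ∑ l, A i l * x l :=
  sumS_finRange _

lemma spow_eq_pow (a : Smax Γ) (k : ℕ) : spow a k = a ^ k := by
  induction k with
  | zero => rfl
  | succ k ih => rw [spow, ih, pow_succ', smul_eq_mul]

def unitsSign : ℤˣ →* Smax Γ where
  toFun u := if u = 1 then 1 else sneg 1
  map_one' := if_pos rfl
  map_mul' u v := by
    have h : sneg 1 * sneg (1 : Smax Γ) = 1 := by rw [← sneg_mul, one_mul, sneg_sneg]
    rcases Int.units_eq_one_or u with rfl | rfl <;>
      rcases Int.units_eq_one_or v with rfl | rfl <;> simp [h]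

lemma unitsSign_neg_one : unitsSign (-1) = (sneg 1 : Smax Γ) := by
  change (if (-1 : ℤˣ) = 1 then (1 : Smax Γ) else sneg 1) = _
  exact if_neg (by decide)

lemma detS_eq_sum {n : ℕ} (M : Matrix (Fin n) (Fin n) (Smax Γ)) :
    detS M = ∑ π : Equiv.Perm (Fin n), unitsSign (Equiv.Perm.sign π) * ∏ i, M i (π i) := by
  rw [detS, sumS_toList]
  refine Finset.sum_congr rfl fun π _ => ?_
  rw [prodS_finRange, ← smul_eq_mul]
  congr 1
  rcases Int.units_eq_one_or (Equiv.Perm.sign π) with h | h <;>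
    simp [permSignS, unitsSign, h, sone_eq_one]

lemma adjS_apply {n : ℕ} (M : Matrix (Fin (n + 1)) (Fin (n + 1)) (Smax Γ)) (i j : Fin (n + 1)) :
    adjS M i j = sneg 1 ^ ((i : ℕ) + j) *
      detS (Matrix.of fun a b : Fin n => M (j.succAbove a) (i.succAbove b)) := by
  rw [adjS, Matrix.of_apply, spow_eq_pow, smul_eq_mul, sone_eq_one]

theorem detS_eq_sum_mul_adjS {n : ℕ} (M : Matrix (Fin (n + 1)) (Fin (n + 1)) (Smax Γ))
    (j : Fin (n + 1)) : detS M = ∑ l, M j l * adjS M l j := by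
  rw [detS_eq_sum, ← (Fin.bijective_permSuccAbove j).sum_comp, Fintype.sum_prod_type]
  refine Finset.sum_congr rfl fun l _ => ?_
  rw [adjS_apply, detS_eq_sum, Finset.mul_sum, Finset.mul_sum]
  refine Finset.sum_congr rfl fun σ _ => ?_
  rw [Fin.sign_permSuccAbove, map_mul, map_pow, unitsSign_neg_one,
    Fin.prod_univ_succAbove _ j]
  simp only [Fin.permSuccAbove_apply_self, Fin.permSuccAbove_apply_succAbove, Matrix.of_apply]
  ring

lemma detS_updateRow {n : ℕ} (M : Matrix (Fin (n + 1)) (Fin (n + 1)) (Smax Γ))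
    (j : Fin (n + 1)) (u : Fin (n + 1) → Smax Γ) :
    detS (M.updateRow j u) = ∑ l, u l * adjS M l j := by
  rw [detS_eq_sum_mul_adjS _ j]
  refine Finset.sum_congr rfl fun l _ => ?_
  simp only [adjS_apply, Matrix.updateRow_self, Matrix.updateRow_ne (Fin.succAbove_ne j _)]

end Determinant

section Lift

open AddMonoidAlgebra

section Basic

variable {Γ : Type} [AddCommGroup Γ] [LinearOrder Γ]

/-- `x` lifts `a` when its leading term has exponent `|a|` and the sign of `a`, for `a` signed;
for `a` balanced, only the exponents of `x` are bounded by `|a|`. -/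
def IsLift (x : AddMonoidAlgebra ℝ Γ) : Smax Γ → Prop
  | none => x = 0
  | some (c, s) => x.supDegree WithBot.some ≤ c ∧ (s ≠ SSign.bal → 0 < s.toReal * x.coeff c)

lemma IsLift.supDegree_le {x : AddMonoidAlgebra ℝ Γ} {a : Smax Γ} (h : IsLift x a) :
    x.supDegree WithBot.some ≤ smod a := by
  rcases a with _ | ⟨c, s⟩
  · rw [show x = 0 from h, supDegree_zero]
    exact bot_le
  · exact h.1

lemma IsLift.isBal {a : Smax Γ} (h : IsLift 0 a) : IsBal a := by
  rcases a with _ | ⟨c, s⟩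
  · trivial
  · by_contra hs
    simpa using h.2 hs

lemma isLift_one : IsLift (1 : AddMonoidAlgebra ℝ Γ) 1 := by
  refine ⟨?_, fun _ => ?_⟩ <;> simp [one_def, supDegree_single, SSign.toReal]

lemma isLift_add_of_lt {x y : AddMonoidAlgebra ℝ Γ} {c d : Γ} {s t : SSign}
    (hx : IsLift x (some (c, s))) (hy : IsLift y (some (d, t))) (hcd : c < d) :
    IsLift (x + y) (some (d, t)) := by
  have hxd : x.coeff d = 0 := coeff_eq_zero_of_not_le_supDegree fun h =>
    (WithBot.coe_lt_coe.2 hcd).not_ge (h.trans hx.1)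
  refine ⟨supDegree_add_le.trans (sup_le (hx.1.trans (WithBot.coe_le_coe.2 hcd.le)) hy.1),
    fun ht => ?_⟩
  simpa [hxd] using hy.2 ht

end Basic

variable {Γ : Type} [AddCommGroup Γ] [LinearOrder Γ] [IsOrderedAddMonoid Γ]

lemma isLift_add {x y : AddMonoidAlgebra ℝ Γ} {a b : Smax Γ} (hx : IsLift x a)
    (hy : IsLift y b) : IsLift (x + y) (a + b) := by
  rcases a with _ | ⟨c, s⟩
  · rwa [show x = 0 from hx, zero_add, none_eq_zero, zero_add]
  rcases b with _ | ⟨d, t⟩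
  · rwa [show y = 0 from hy, add_zero, none_eq_zero, add_zero]
  rw [← sadd_eq_add]
  rcases lt_trichotomy c d with hcd | rfl | hcd
  · rw [sadd_of_lt hcd]
    exact isLift_add_of_lt hx hy hcd
  · rw [sadd_self]
    refine ⟨supDegree_add_le.trans (sup_le hx.1 hy.1), fun hst => ?_⟩
    by_cases h : s = t
    · subst h
      simp only [SSign.join, if_true] at hst ⊢
      rw [coeff_add, Finsupp.add_apply, mul_add]
      exact add_pos (hx.2 hst) (hy.2 hst)
    · simp [SSign.join, h] at hst
  · rw [sadd_of_gt hcd, add_comm x]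
    exact isLift_add_of_lt hy hx hcd

lemma coeff_mul_of_supDegree_le {x y : AddMonoidAlgebra ℝ Γ} {c d : Γ}
    (hx : x.supDegree WithBot.some ≤ c) (hy : y.supDegree WithBot.some ≤ d) :
    (x * y).coeff (c + d) = x.coeff c * y.coeff d := by
  refine coeff_mul_add_of_uniqueAdd fun a b ha hb hab => ?_
  exact (add_eq_add_iff_eq_and_eq (WithBot.coe_le_coe.1 ((Finset.le_sup ha).trans hx))
    (WithBot.coe_le_coe.1 ((Finset.le_sup hb).trans hy))).1 hab

lemma isLift_mul {x y : AddMonoidAlgebra ℝ Γ} {a b : Smax Γ} (hx : IsLift x a)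
    (hy : IsLift y b) : IsLift (x * y) (a * b) := by
  rcases a with _ | ⟨c, s⟩
  · rw [show x = 0 from hx, zero_mul, none_eq_zero, zero_mul]
    rfl
  rcases b with _ | ⟨d, t⟩
  · rw [show y = 0 from hy, mul_zero, none_eq_zero, mul_zero]
    rfl
  rw [← smul_eq_mul, smul_some_some]
  refine ⟨(supDegree_mul_le (fun _ _ => WithBot.coe_add _ _)).trans (add_le_add hx.1 hy.1),
    fun hst => ?_⟩
  obtain ⟨hs, ht⟩ := SSign.ne_bal_of_sgnMul_ne_bal hst
  rw [coeff_mul_of_supDegree_le hx.1 hy.1, SSign.toReal_sgnMul, mul_mul_mul_comm]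
  exact mul_pos (hx.2 hs) (hy.2 ht)

lemma isLift_sum {ι : Type} (s : Finset ι) {x : ι → AddMonoidAlgebra ℝ Γ}
    {f : ι → Smax Γ}
    (h : ∀ i ∈ s, IsLift (x i) (f i)) : IsLift (∑ i ∈ s, x i) (∑ i ∈ s, f i) := by
  classical
  induction s using Finset.cons_induction with
  | empty => exact rfl
  | cons i s hi ih =>
    rw [Finset.sum_cons, Finset.sum_cons]
    exact isLift_add (h i (s.mem_cons_self i)) (ih fun j hj => h j (Finset.mem_cons_of_mem hj))

lemma isLift_prod {ι : Type} (s : Finset ι) {x : ι → AddMonoidAlgebra ℝ Γ}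
    {f : ι → Smax Γ}
    (h : ∀ i ∈ s, IsLift (x i) (f i)) : IsLift (∏ i ∈ s, x i) (∏ i ∈ s, f i) := by
  classical
  induction s using Finset.cons_induction with
  | empty => exact isLift_one
  | cons i s hi ih =>
    rw [Finset.prod_cons, Finset.prod_cons]
    exact isLift_mul (h i (s.mem_cons_self i)) (ih fun j hj => h j (Finset.mem_cons_of_mem hj))

noncomputable def canonicalLift : Smax Γ →* AddMonoidAlgebra ℝ Γ where
  toFun
    | none => 0
    | some (c, s) => single c s.toReal
  map_one' := by simp [sone_eq_one.symm, sone, SSign.toReal, one_def]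
  map_mul' a b := by
    rcases a with _ | ⟨c, s⟩
    · exact (zero_mul _).symm
    rcases b with _ | ⟨d, t⟩
    · exact (mul_zero _).symm
    · change single (c + d) (sgnMul s t).toReal = _
      rw [single_mul_single, SSign.toReal_sgnMul]

lemma isLift_canonicalLift (a : Smax Γ) : IsLift (canonicalLift a) a := by
  rcases a with _ | ⟨c, s⟩
  · rfl
  · refine ⟨?_, fun hs => ?_⟩
    · change (single c s.toReal).supDegree _ ≤ _
      rw [supDegree_single]
      split_ifs <;> simp
    · change 0 < s.toReal * (single c s.toReal).coeff c
      rw [coeff_single, Finsupp.single_eq_same, SSign.toReal_mul_self hs]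
      exact one_pos

lemma canonicalLift_unitsSign (u : ℤˣ) :
    canonicalLift (unitsSign u : Smax Γ) = ((u : ℤ) : AddMonoidAlgebra ℝ Γ) := by
  rcases Int.units_eq_one_or u with rfl | rfl
  · simp
  · rw [unitsSign_neg_one]
    change single 0 (-1) = _
    simp [one_def]

lemma isLift_det {n : ℕ} {X : Matrix (Fin n) (Fin n) (AddMonoidAlgebra ℝ Γ)}
    {N : Matrix (Fin n) (Fin n) (Smax Γ)} (h : ∀ i j, IsLift (X i j) (N i j)) :
    IsLift X.det (detS N) := by
  rw [← Matrix.det_transpose, Matrix.det_apply', detS_eq_sum]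
  refine isLift_sum _ fun σ _ => ?_
  rw [← canonicalLift_unitsSign]
  exact isLift_mul (isLift_canonicalLift _) (isLift_prod _ fun i _ => h i (σ i))

lemma isBal_detS_of_row_eq {n : ℕ} {M : Matrix (Fin n) (Fin n) (Smax Γ)} {i j : Fin n}
    (hij : i ≠ j) (hrow : M i = M j) : IsBal (detS M) := by
  have h := isLift_det (X := Matrix.of fun i j => canonicalLift (M i j))
    fun i j => isLift_canonicalLift (M i j)
  rw [Matrix.det_zero_of_row_eq (M := Matrix.of fun i j => canonicalLift (M i j)) hij
    (by ext; simp [hrow])] at h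
  exact h.isBal

end Lift

section Kernel

open AddMonoidAlgebra Finset

lemma exists_isLift_sum_eq_zero_of_pivot {Γ : Type} [AddCommGroup Γ] [LinearOrder Γ] {ι : Type}
    [Fintype ι] [DecidableEq ι] {f : ι → Smax Γ} (p : ι) (z : ι → AddMonoidAlgebra ℝ Γ)
    (hz : ∀ i ≠ p, IsLift (z i) (f i)) (hp : IsLift (-∑ i ∈ univ.erase p, z i) (f p)) :
    ∃ z : ι → AddMonoidAlgebra ℝ Γ, (∀ i, IsLift (z i) (f i)) ∧ ∑ i, z i = 0 := by
  refine ⟨Function.update z p (-∑ i ∈ univ.erase p, z i), fun i => ?_, ?_⟩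
  · rcases eq_or_ne i p with rfl | hi
    · rwa [Function.update_self]
    · rw [Function.update_of_ne hi]
      exact hz i hi
  · rw [← add_sum_erase _ _ (mem_univ p), Function.update_self,
      sum_congr rfl fun i hi => Function.update_of_ne (ne_of_mem_erase hi) _ _, neg_add_cancel]

variable {Γ : Type} [AddCommGroup Γ] [LinearOrder Γ] [IsOrderedAddMonoid Γ]

lemma exists_smod_eq_ne_of_sum_eq_bal {ι : Type} {s : Finset ι} {f : ι → Smax Γ} {μ : Γ}
    {t : SSign} (ht : t ≠ SSign.bal) (h : ∑ i ∈ s, f i = some (μ, SSign.bal)) :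
    ∃ q ∈ s, smod (f q) = μ ∧ f q ≠ some (μ, t) := by
  by_contra! hall
  have hle : ∀ i ∈ s, smod (f i) ≤ μ := fun i hi => by
    simpa [h, smod] using (smod_sum s f).ge.trans' (le_sup hi)
  let P : Smax Γ → Prop := fun a => a = some (μ, t) ∨ smod a < μ
  have hadd : ∀ a b, P a → P b → P (a + b) := by
    have key : ∀ b, smod b < μ → some (μ, t) + b = some (μ, t) := by
      rintro (_ | ⟨d, u⟩) hb
      · rfl
      · exact sadd_of_gt (by simpa [smod] using hb) t u
    rintro a b (rfl | ha) (rfl | hb)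
    · left
      rw [← sadd_eq_add, sadd_self]
      simp [SSign.join]
    · exact Or.inl (key b hb)
    · exact Or.inl ((add_comm a _).trans (key a ha))
    · exact Or.inr (by rw [smod_add]; exact max_lt ha hb)
  have hP : P (∑ i ∈ s, f i) := sum_induction f P hadd (Or.inr (WithBot.bot_lt_coe μ))
    fun i hi => (hle i hi).lt_or_eq.symm.imp (hall i hi) id
  rw [h] at hP
  rcases hP with hP | hP
  · exact ht (Prod.ext_iff.1 (Option.some.inj hP)).2.symm
  · exact lt_irrefl _ hP

variable {ι : Type} [Fintype ι] [DecidableEq ι] {f : ι → Smax Γ}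

lemma exists_isLift_sum_eq_zero_of_isBal {μ : Γ} (hle : ∀ i, smod (f i) ≤ μ) (p : ι)
    (hp : f p = some (μ, SSign.bal)) :
    ∃ z : ι → AddMonoidAlgebra ℝ Γ, (∀ i, IsLift (z i) (f i)) ∧ ∑ i, z i = 0 := by
  refine exists_isLift_sum_eq_zero_of_pivot p (fun i => canonicalLift (f i))
    (fun i _ => isLift_canonicalLift _) ?_
  rw [hp]
  refine ⟨?_, fun h => absurd rfl h⟩
  rw [supDegree_neg]
  exact ((isLift_sum _ fun i _ => isLift_canonicalLift (f i)).supDegree_le).trans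
    ((smod_sum _ _).le.trans (Finset.sup_le fun i _ => hle i))

/-- A large enough coefficient at `q`, of the sign opposite to `f p`, makes minus the other lifts
a lift of `f p`. -/
lemma exists_isLift_sum_eq_zero_of_ne {μ : Γ} (hle : ∀ i, smod (f i) ≤ μ) {p q : ι}
    {s u : SSign}
    (hs : s ≠ SSign.bal) (hp : f p = some (μ, s)) (hq : f q = some (μ, u)) (hsu : u ≠ s) :
    ∃ z : ι → AddMonoidAlgebra ℝ Γ, (∀ i, IsLift (z i) (f i)) ∧ ∑ i, z i = 0 := by
  have hqp : q ≠ p := fun h => hsu (by simpa [h, hp] using hq.symm)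
  set R := ∑ i ∈ (univ.erase p).erase q, canonicalLift (f i)
  set w : AddMonoidAlgebra ℝ Γ := single μ (-(|R.coeff μ| + 1) * s.toReal)
  have hR : R.supDegree WithBot.some ≤ μ :=
    (isLift_sum _ fun i _ => isLift_canonicalLift (f i)).supDegree_le.trans
      ((smod_sum _ _).le.trans (Finset.sup_le fun i _ => hle i))
  have hw : w.supDegree WithBot.some ≤ μ := by
    rw [supDegree_single]
    split_ifs <;> simp
  refine exists_isLift_sum_eq_zero_of_pivot p (Function.update (fun i => canonicalLift (f i)) q w)
    (fun i hi => ?_) ?_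
  · rcases eq_or_ne i q with rfl | hiq
    · rw [Function.update_self, hq]
      refine ⟨hw, fun hu => ?_⟩
      rw [coeff_single, Finsupp.single_eq_same, SSign.toReal_eq_neg_of_ne hs hu hsu]
      have := SSign.toReal_mul_self hs
      nlinarith [abs_nonneg (R.coeff μ)]
    · rw [Function.update_of_ne hiq]
      exact isLift_canonicalLift _
  · rw [← add_sum_erase _ _ (mem_erase.2 ⟨hqp, mem_univ q⟩), Function.update_self,
      sum_congr rfl fun i hi => Function.update_of_ne (ne_of_mem_erase hi) _ _, hp]
    refine ⟨?_, fun _ => ?_⟩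
    · rw [supDegree_neg]
      exact supDegree_add_le.trans (sup_le hw hR)
    · rw [coeff_neg, coeff_add, Finsupp.neg_apply, Finsupp.add_apply, coeff_single,
        Finsupp.single_eq_same]
      rcases SSign.toReal_eq_one_or hs with h | h <;> rw [h] <;>
        linarith [le_abs_self (R.coeff μ), neg_abs_le (R.coeff μ)]

lemma exists_isLift_sum_eq_zero (hf : IsBal (∑ i, f i)) :
    ∃ z : ι → AddMonoidAlgebra ℝ Γ, (∀ i, IsLift (z i) (f i)) ∧ ∑ i, z i = 0 := by
  rcases hsum : ∑ i, f i with _ | ⟨μ, t⟩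
  · refine ⟨fun i => canonicalLift (f i), fun i => isLift_canonicalLift _, ?_⟩
    have h := isLift_sum univ fun i _ => isLift_canonicalLift (f i)
    rwa [hsum] at h
  obtain rfl : t = SSign.bal := by rw [hsum] at hf; exact hf
  have hle : ∀ i, smod (f i) ≤ μ := fun i => by
    simpa [hsum, smod] using (smod_sum univ f).ge.trans' (le_sup (mem_univ i))
  obtain ⟨p, hp⟩ : ∃ p, smod (f p) = μ := by
    by_contra! h
    have : smod (∑ i, f i) < μ := by
      rw [smod_sum]
      exact (Finset.sup_lt_iff (WithBot.bot_lt_coe μ)).2 fun i _ => (hle i).lt_of_ne (h i)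
    simp [hsum, smod] at this
  rcases hfp : f p with _ | ⟨c, s⟩
  · simp [hfp, smod] at hp
  obtain rfl : c = μ := by simpa [hfp, smod] using hp
  by_cases hs : s = SSign.bal
  · exact exists_isLift_sum_eq_zero_of_isBal hle p (hs ▸ hfp)
  obtain ⟨q, -, hqμ, hq⟩ := exists_smod_eq_ne_of_sum_eq_bal hs hsum
  rcases hfq : f q with _ | ⟨d, u⟩
  · simp [hfq, smod] at hqμ
  obtain rfl : d = c := by simpa [hfq, smod] using hqμ
  exact exists_isLift_sum_eq_zero_of_ne hle hs hfp hfq fun hu => hq (by rw [hfq, hu])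

lemma exists_isLift_sum_mul_eq_zero {b v : ι → Smax Γ} (hv : ∀ i, IsSigned (v i))
    (h : IsBal (∑ i, b i * v i)) :
    ∃ y : ι → AddMonoidAlgebra ℝ Γ,
      (∀ i, IsLift (y i) (b i)) ∧ ∑ i, y i * canonicalLift (v i) = 0 := by
  obtain ⟨z, hz, hsum⟩ := exists_isLift_sum_eq_zero h
  refine ⟨fun i => if v i = 0 then canonicalLift (b i) else z i * canonicalLift (sinv (v i)),
    fun i => ?_, hsum ▸ sum_congr rfl fun i _ => ?_⟩
  all_goals by_cases hvi : v i = 0 <;> simp only [hvi, if_true, if_false]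
  · exact isLift_canonicalLift _
  · simpa [mul_assoc, mul_sinv_cancel (hv i) hvi] using
      isLift_mul (hz i) (isLift_canonicalLift (sinv (v i)))
  · have hzi : IsLift (z i) (b i * 0) := hvi ▸ hz i
    rw [mul_zero] at hzi
    rw [show z i = 0 from hzi]
    exact mul_zero _
  · rw [mul_assoc, ← map_mul, mul_comm (sinv _), mul_sinv_cancel (hv i) hvi, map_one, mul_one]

theorem isBal_detS_of_forall_isBal_sum {n : ℕ} (N : Matrix (Fin n) (Fin n) (Smax Γ))
    {v : Fin n → Smax Γ} (hv : ∀ i, IsSigned (v i)) (hv0 : v ≠ 0)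
    (hN : ∀ r, IsBal (∑ l, N r l * v l)) : IsBal (detS N) := by
  choose Y hY hYv using fun r => exists_isLift_sum_mul_eq_zero hv (hN r)
  have hdet : (Matrix.of Y).det = 0 := by
    refine Matrix.exists_mulVec_eq_zero_iff.1 ⟨fun l => canonicalLift (v l), fun h0 => hv0 ?_,
      funext hYv⟩
    funext k
    by_contra hk
    have h1 := congrArg (· * canonicalLift (sinv (v k))) (congrFun h0 k)
    simp only [← map_mul, mul_sinv_cancel (hv k) hk, map_one, Pi.zero_apply, zero_mul] at h1
    exact one_ne_zero h1
  have h := isLift_det (X := Matrix.of Y) fun i j => hY i j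
  rw [hdet] at h
  exact h.isBal

end Kernel

section Eigenvectors

variable {Γ : Type} [AddCommGroup Γ] [LinearOrder Γ] [IsOrderedAddMonoid Γ]

open Finset

lemma balance_iff_isBal_sum_charMatS {n : ℕ} (γ : Smax Γ) (A : Matrix (Fin n) (Fin n) (Smax Γ))
    (x : Fin n → Smax Γ) (i : Fin n) :
    Balance (matVecS A x i) (smul γ (x i)) ↔ IsBal (∑ l, charMatS γ A i l * x l) := by
  have hterm : ∀ l, charMatS γ A i l * x l =
      (if i = l then γ * x l else 0) + sneg (A i l * x l) := by
    intro l
    rw [charMatS, Matrix.of_apply, ssub, idMatS, Matrix.of_apply, sadd_eq_add, add_mul, sneg_mul]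
    split_ifs <;> simp [smul_eq_mul, sone_eq_one, szero_eq_zero]
  rw [sum_congr rfl fun l _ => hterm l, sum_add_distrib, sum_ite_eq, if_pos (mem_univ i),
    ← sneg_sum, Balance, ssub, matVecS_apply, sadd_eq_add, smul_eq_mul]
  change _ ↔ IsBal (γ * x i + sneg (∑ l, A i l * x l))
  rw [← isBal_sneg, sneg_add, sneg_sneg, add_comm]

lemma isBal_sum_mul_adjS {n : ℕ} {M : Matrix (Fin (n + 1)) (Fin (n + 1)) (Smax Γ)}
    (hM : IsBal (detS M)) (i j : Fin (n + 1)) : IsBal (∑ l, M i l * adjS M l j) := by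
  rw [← detS_updateRow]
  rcases eq_or_ne i j with rfl | hij
  · rwa [Matrix.updateRow_eq_self]
  · exact isBal_detS_of_row_eq hij (by rw [Matrix.updateRow_ne hij, Matrix.updateRow_self])

lemma mul_adjS_eq_mul_adjS {n : ℕ} {M : Matrix (Fin (n + 1)) (Fin (n + 1)) (Smax Γ)}
    {v : Fin (n + 1) → Smax Γ} (hv : ∀ l, IsSigned (v l)) (hv0 : v ≠ 0)
    (hM : ∀ r, IsBal (∑ l, M r l * v l)) {j : Fin (n + 1)} (hw : ∀ l, IsSigned (adjS M l j))
    (i k : Fin (n + 1)) : v i * adjS M k j = v k * adjS M i j := by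
  set u : Fin (n + 1) → Smax Γ := Pi.single k (v i) + Pi.single i (sneg (v k))
  have hu : ∀ x : Fin (n + 1) → Smax Γ, ∑ l, u l * x l = v i * x k + sneg (v k * x i) := by
    intro x
    simp [u, add_mul, sum_add_distrib, Pi.single_apply, sneg_mul]
  apply eq_of_isBal_add_sneg (isSigned_mul (hv i) (hw k)) (isSigned_mul (hv k) (hw i))
  rw [← hu fun l => adjS M l j, ← detS_updateRow]
  refine isBal_detS_of_forall_isBal_sum _ hv hv0 fun r => ?_
  rcases eq_or_ne r j with rfl | hr
  · simp only [Matrix.updateRow_self]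
    rw [hu, mul_comm (v k)]
    exact isBal_add_sneg_self _
  · simp only [Matrix.updateRow_ne hr]
    exact hM r

lemma exists_eq_mul_of_mul_eq_mul {ι : Type} {v w : ι → Smax Γ} (hv : ∀ i, IsSigned (v i))
    (hw : ∀ i, IsSigned (w i)) (hv0 : v ≠ 0) (hw0 : w ≠ 0)
    (h : ∀ i k, v i * w k = v k * w i) :
    ∃ c : Smax Γ, IsSigned c ∧ c ≠ 0 ∧ v = fun i => c * w i := by
  obtain ⟨k, hk⟩ := Function.ne_iff.1 hw0
  have hvk : v k ≠ 0 := fun h0 => hv0 <| funext fun i =>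
    (mul_eq_zero.1 ((h i k).trans (by rw [h0, zero_mul]))).resolve_right hk
  refine ⟨v k * sinv (w k), isSigned_mul (hv k) (isSigned_sinv (hw k)),
    mul_ne_zero hvk (sinv_ne_zero hk), funext fun i => ?_⟩
  calc v i = v i * w k * sinv (w k) := by rw [mul_assoc, mul_sinv_cancel (hw k) hk, mul_one]
    _ = v k * sinv (w k) * w i := by rw [h i k]; ring

end Eigenvectors

theorem adjugate_column_is_unique_eigenvector_general {Γ : Type}
    [AddCommGroup Γ] [LinearOrder Γ] [IsOrderedAddMonoid Γ] {n : ℕ}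
    (A : Matrix (Fin (n+1)) (Fin (n+1)) (Smax Γ)) (γ : Smax Γ)
    (heig : IsBal (detS (charMatS γ A)))
    (j : Fin (n+1))
    (hcolsgn : ∀ l, IsSigned (adjS (charMatS γ A) l j))
    (hcolne : (fun l => adjS (charMatS γ A) l j) ≠ zeroVecS) :
    (∀ i, Balance (matVecS A (fun l => adjS (charMatS γ A) l j) i)
        (smul γ (adjS (charMatS γ A) i j))) ∧
    (∀ v : Fin (n+1) → Smax Γ, VecSigned v → v ≠ zeroVecS →
      (∀ i, Balance (matVecS A v i) (smul γ (v i))) →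
      ∃ lam : Smax Γ, IsSigned lam ∧ lam ≠ szero ∧
        v = fun l => smul lam (adjS (charMatS γ A) l j)) := by
  refine ⟨fun i => (balance_iff_isBal_sum_charMatS _ _ _ i).2 (isBal_sum_mul_adjS heig i j),
    fun v hv hv0 hveig => ?_⟩
  have hker : ∀ r, IsBal (∑ l, charMatS γ A r l * v l) :=
    fun r => (balance_iff_isBal_sum_charMatS _ _ _ r).1 (hveig r)
  exact exists_eq_mul_of_mul_eq_mul hv hcolsgn hv0 hcolne
    (mul_adjS_eq_mul_adjS hv hv0 hker hcolsgn)

/-- if γ is an 𝕊max-eigenvalue of A, B = γ⊙I ⊖ A, and the j-th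
column of B^adj is signed and nonzero, then this column is an
𝕊max-eigenvector of A for γ and every 𝕊max-eigenvector for γ is a signed
nonzero multiple of it. -/
theorem adjugate_column_is_unique_eigenvector {Γ : Type}
    [AddCommGroup Γ] [LinearOrder Γ] [IsOrderedAddMonoid Γ] [Nontrivial Γ] (hdiv : DivisibleGrp Γ) {n : ℕ}
    (A : Matrix (Fin (n+1)) (Fin (n+1)) (Smax Γ)) (γ : Smax Γ) (hγ : IsSigned γ)
    (heig : IsBal (detS (charMatS γ A)))
    (j : Fin (n+1))
    (hcolsgn : ∀ l, IsSigned (adjS (charMatS γ A) l j))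
    (hcolne : (fun l => adjS (charMatS γ A) l j) ≠ zeroVecS) :
    (∀ i, Balance (matVecS A (fun l => adjS (charMatS γ A) l j) i)
        (smul γ (adjS (charMatS γ A) i j))) ∧
    (∀ v : Fin (n+1) → Smax Γ, VecSigned v → v ≠ zeroVecS →
      (∀ i, Balance (matVecS A v i) (smul γ (v i))) →
      ∃ lam : Smax Γ, IsSigned lam ∧ lam ≠ szero ∧
        v = fun l => smul lam (adjS (charMatS γ A) l j)) :=
  adjugate_column_is_unique_eigenvector_general A γ heig j hcolsgn hcolne

end TropPaper
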